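/- arXiv:math/0308223 — 2 statements merged into one kernel-verified Lean document; each statement's English description precedes it below -/
import Mathlib

section
/- Let 𝓜 : ℝ^m → ℝ^m be a Σ∆ map with input x ∈ ℝ whose partition sets Ω_i are Lebesgue measurable, and let Γ ⊆ ℝ^m be a bounded Lebesgue measurable set with 𝓜(Γ) = Γ. Then the restriction of 𝓜 to Γ preserves Lebesgue measure: for every Lebesgue measurable B ⊆ Γ, the Lebesgue measure of 𝓜^{-1}(B) ∩ Γ equals the Lebesgue measure of B. -/
/-!
On each piece `Ω i` the map `M` is the affine map `v ↦ L v + c i` with `det L = 1`, so `M` does not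
increase the measure of any measurable set. If `M '' Γ = Γ`, every measurable `C ⊆ Γ` is covered by
`M '' (M ⁻¹' C ∩ Γ)`, whence `vol C ≤ vol (M ⁻¹' C ∩ Γ)`. Applying this to `B` and to `Γ \ B`, whose
preimages split `Γ`, and using `vol Γ < ∞`, both inequalities are equalities.
-/

open MeasureTheory

noncomputable section

/-- The m×m lower-triangular matrix of ones: `L i j = 1` iff `j ≤ i`. -/
def Lmat (m : ℕ) : Matrix (Fin m) (Fin m) ℝ :=
  fun i j => if j ≤ i then 1 else 0

/-- A Σ∆ map with input `x` whose partition pieces are Lebesgue measurable. -/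
def IsMeasSigmaDeltaMap (m : ℕ) (x : ℝ) (M : (Fin m → ℝ) → (Fin m → ℝ)) : Prop :=
  ∃ (K : ℕ) (Ω : Fin K → Set (Fin m → ℝ)) (d : Fin K → (Fin m → ℤ)),
    (∀ i, MeasurableSet (Ω i)) ∧
    (∀ v, ∃! i, v ∈ Ω i) ∧
    ∀ i, ∀ v ∈ Ω i, M v = (Lmat m).mulVec v + (fun _ => x) + (fun j => (d i j : ℝ))

open Set Function Matrix

section

variable {α : Type*} [MeasurableSpace α]

section Partition

variable {β ι : Type*} [MeasurableSpace β] [Countable ι] {M : α → β} {Ω : ι → Set α}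

theorem measurable_of_eqOn_cover {f : ι → α → β} (hΩ : ∀ i, MeasurableSet (Ω i))
    (hcover : ⋃ i, Ω i = univ) (hf : ∀ i, Measurable (f i)) (hMf : ∀ i, EqOn M (f i) (Ω i)) :
    Measurable M := by
  intro s hs
  have hpre : M ⁻¹' s = ⋃ i, Ω i ∩ f i ⁻¹' s := by
    ext v
    obtain ⟨i, hi⟩ := mem_iUnion.mp (hcover ▸ mem_univ v : v ∈ ⋃ i, Ω i)
    simp only [mem_preimage, mem_iUnion, mem_inter_iff]
    exact ⟨fun h => ⟨i, hi, hMf i hi ▸ h⟩, fun ⟨j, hj, h⟩ => hMf j hj ▸ h⟩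
  rw [hpre]
  exact .iUnion fun i => (hΩ i).inter (hf i hs)

theorem measure_image_le_of_partition {μ : Measure α} {ν : Measure β}
    (hΩ : ∀ i, MeasurableSet (Ω i)) (hcover : ⋃ i, Ω i = univ)
    (hdisj : Pairwise (Disjoint on Ω)) (hM : ∀ i, ∀ t ⊆ Ω i, ν (M '' t) ≤ μ t)
    {s : Set α} (hs : MeasurableSet s) : ν (M '' s) ≤ μ s := by
  have hsplit : s = ⋃ i, s ∩ Ω i := by rw [← inter_iUnion, hcover, inter_univ]
  calc ν (M '' s) = ν (⋃ i, M '' (s ∩ Ω i)) := by rw [← image_iUnion, ← hsplit]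
    _ ≤ ∑' i, ν (M '' (s ∩ Ω i)) := measure_iUnion_le _
    _ ≤ ∑' i, μ (s ∩ Ω i) := ENNReal.tsum_le_tsum fun i => hM i _ inter_subset_right
    _ = μ s := by
      rw [← measure_iUnion (fun i j hij => (hdisj hij).mono inter_subset_right inter_subset_right)
        fun i => hs.inter (hΩ i), ← hsplit]

end Partition

theorem measure_preimage_inter_eq_of_image_le {μ : Measure α} {M : α → α} (hM : Measurable M)
    (himage : ∀ s, MeasurableSet s → μ (M '' s) ≤ μ s) {Γ : Set α} (hΓ : MeasurableSet Γ)
    (hΓfin : μ Γ ≠ ⊤) (hinv : M '' Γ = Γ) {B : Set α} (hB : MeasurableSet B) (hBΓ : B ⊆ Γ) :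
    μ (M ⁻¹' B ∩ Γ) = μ B := by
  have hle : ∀ C, MeasurableSet C → C ⊆ Γ → μ C ≤ μ (M ⁻¹' C ∩ Γ) := fun C hC hCΓ =>
    calc μ C ≤ μ (M '' (M ⁻¹' C ∩ Γ)) := by
          rw [image_preimage_inter, hinv, inter_eq_left.mpr hCΓ]
      _ ≤ μ (M ⁻¹' C ∩ Γ) := himage _ ((hM hC).inter hΓ)
  have hcompl : M ⁻¹' (Γ \ B) ∩ Γ = Γ \ M ⁻¹' B := by
    have hmaps : Γ ⊆ M ⁻¹' Γ := image_subset_iff.mp hinv.le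
    ext v
    simp only [mem_inter_iff, mem_preimage, mem_sdiff]
    exact ⟨fun ⟨⟨_, hvB⟩, hv⟩ => ⟨hv, hvB⟩, fun ⟨hv, hvB⟩ => ⟨⟨hmaps hv, hvB⟩, hv⟩⟩
  have hle_compl : μ (Γ \ B) ≤ μ (Γ \ M ⁻¹' B) :=
    hcompl ▸ hle _ (hΓ.diff hB) sdiff_subset
  have hfin : μ (Γ \ M ⁻¹' B) ≠ ⊤ := ne_top_of_le_ne_top hΓfin (measure_mono sdiff_subset)
  refine le_antisymm ((ENNReal.add_le_add_iff_right hfin).mp ?_) (hle B hB hBΓ)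
  calc μ (M ⁻¹' B ∩ Γ) + μ (Γ \ M ⁻¹' B) = μ Γ := by
        rw [inter_comm, measure_inter_add_sdiff _ (hM hB)]
    _ = μ B + μ (Γ \ B) := by rw [measure_add_sdiff hB.nullMeasurableSet, union_eq_right.mpr hBΓ]
    _ ≤ μ B + μ (Γ \ M ⁻¹' B) := add_le_add_right hle_compl _

end

theorem Lmat_det (m : ℕ) : (Lmat m).det = 1 := by
  rw [Matrix.det_of_isLowerTriangular (Lmat m) fun i j hij => if_neg (not_le.mpr hij)]
  simp [Lmat]

theorem volume_image_mulVec_add {m : ℕ} (A : Matrix (Fin m) (Fin m) ℝ) (c : Fin m → ℝ)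
    (s : Set (Fin m → ℝ)) :
    volume ((fun v => A *ᵥ v + c) '' s) = ENNReal.ofReal |A.det| * volume s := by
  have hcomp : (fun v => A *ᵥ v + c) '' s = (· + c) '' (Matrix.toLin' A '' s) := by
    rw [← image_comp]; rfl
  rw [hcomp, image_add_right, measure_preimage_add_right, Measure.addHaar_image_linearMap,
    LinearMap.det_toLin']

namespace IsMeasSigmaDeltaMap

variable {m : ℕ} {x : ℝ} {M : (Fin m → ℝ) → (Fin m → ℝ)}

theorem exists_partition (hM : IsMeasSigmaDeltaMap m x M) :
    ∃ (K : ℕ) (Ω : Fin K → Set (Fin m → ℝ)) (c : Fin K → (Fin m → ℝ)),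
      (∀ i, MeasurableSet (Ω i)) ∧ ⋃ i, Ω i = univ ∧ Pairwise (Disjoint on Ω) ∧
      ∀ i, EqOn M (fun v => Lmat m *ᵥ v + c i) (Ω i) := by
  obtain ⟨K, Ω, d, hΩ, hunique, hMd⟩ := hM
  refine ⟨K, Ω, fun i => (fun _ => x) + fun j => (d i j : ℝ), hΩ, ?_, ?_, ?_⟩
  · exact iUnion_eq_univ_iff.mpr fun v => (hunique v).exists
  · exact fun i j hij => disjoint_left.mpr fun v hi hj => hij ((hunique v).unique hi hj)
  · intro i v hv
    rw [hMd i v hv, add_assoc]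

theorem measurable (hM : IsMeasSigmaDeltaMap m x M) : Measurable M := by
  obtain ⟨K, Ω, c, hΩ, hcover, -, hMc⟩ := hM.exists_partition
  exact measurable_of_eqOn_cover hΩ hcover (fun i => by fun_prop) hMc

theorem volume_image_le (hM : IsMeasSigmaDeltaMap m x M) {s : Set (Fin m → ℝ)}
    (hs : MeasurableSet s) : volume (M '' s) ≤ volume s := by
  obtain ⟨K, Ω, c, hΩ, hcover, hdisj, hMc⟩ := hM.exists_partition
  refine measure_image_le_of_partition hΩ hcover hdisj (fun i t ht => ?_) hs
  rw [((hMc i).mono ht).image_eq, volume_image_mulVec_add, Lmat_det]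
  simp

end IsMeasSigmaDeltaMap

theorem sigma_delta_measure_preserving_general (m : ℕ) (x : ℝ)
    (M : (Fin m → ℝ) → (Fin m → ℝ)) (hM : IsMeasSigmaDeltaMap m x M)
    (Γ : Set (Fin m → ℝ)) (hbdd : Bornology.IsBounded Γ)
    (hmeas : MeasurableSet Γ) (hinv : M '' Γ = Γ)
    (B : Set (Fin m → ℝ)) (hB : MeasurableSet B) (hBΓ : B ⊆ Γ) :
    volume (M ⁻¹' B ∩ Γ) = volume B :=
  measure_preimage_inter_eq_of_image_le hM.measurable (fun _ => hM.volume_image_le) hmeas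
    hbdd.measure_lt_top.ne hinv hB hBΓ

/-- if `Γ` is a bounded measurable set with `M(Γ) = Γ`, then the restriction
of `M` to `Γ` preserves Lebesgue measure: for every measurable `B ⊆ Γ`,
`vol (M⁻¹(B) ∩ Γ) = vol B`. -/
theorem sigma_delta_measure_preserving (m : ℕ) (hm : 1 ≤ m) (x : ℝ)
    (M : (Fin m → ℝ) → (Fin m → ℝ)) (hM : IsMeasSigmaDeltaMap m x M)
    (Γ : Set (Fin m → ℝ)) (hbdd : Bornology.IsBounded Γ)
    (hmeas : MeasurableSet Γ) (hinv : M '' Γ = Γ)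
    (B : Set (Fin m → ℝ)) (hB : MeasurableSet B) (hBΓ : B ⊆ Γ) :
    volume (M ⁻¹' B ∩ Γ) = volume B :=
  sigma_delta_measure_preserving_general m x M hM Γ hbdd hmeas hinv B hB hBΓ
end
end

section
/- Let m ≥ 1 and let s ∈ L¹(𝕋) be nonnegative and continuous at 0. Then as M → ∞: ∫₀¹ |2 sin(π ξ)|^{2m} · |sin(π M ξ)/(M sin(π ξ))|^{2(m+1)} · s(ξ) dξ = C(2m, m) · s(0) · M^{−2m−1} + o(M^{−2m−1}), where C(2m, m) is the central binomial coefficient '2m choose m'. -/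
open MeasureTheory Real Filter Asymptotics

noncomputable section

/-!
With `z = e^{2πiξ}` and `D(z) = 1 + z + ⋯ + z^{M-1}`, the identity `(1 - z) D(z) = 1 - z^M`
turns the kernel `|1 - z|^{2m} |D(z)/M|^{2m+2}` into `|P(z)|² / M^{2m+2}` with
`P(z) = (1 - z^M)^m D(z) = ∑_{j ≤ m, r < M} (-1)^j C(m,j) z^{jM+r}`.
The exponents `jM + r` are pairwise distinct, so by Parseval the kernel has total mass
`M ∑_j C(m,j)² / M^{2m+2} = C(2m,m) M^{-2m-1}`, while on `[δ, 1 - δ]` it is `O_δ(M^{-2m-2})`.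
Hence it concentrates at the integers relative to its mass, and continuity of `s` at `0`
(and at `1`, by periodicity) gives the asymptotics.
-/

open Finset

theorem integral_exp_two_pi_int_mul (k : ℤ) :
    ∫ ξ in (0:ℝ)..1, Complex.exp (2 * π * k * ξ * Complex.I) = if k = 0 then 1 else 0 := by
  split_ifs with hk
  · simp [hk]
  have hc : 2 * π * k * Complex.I ≠ 0 := by simp [hk, Real.pi_ne_zero, Complex.I_ne_zero]
  have h1 : Complex.exp (2 * π * k * Complex.I) = 1 := by
    rw [show (2 * π * k * Complex.I : ℂ) = k * (2 * π * Complex.I) by ring]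
    exact Complex.exp_int_mul_two_pi_mul_I k
  simp_rw [show ∀ ξ : ℝ, (2 * π * k * ξ * Complex.I : ℂ) = 2 * π * k * Complex.I * ξ from
    fun ξ => by ring, integral_exp_mul_complex hc]
  simp [h1]

theorem integral_norm_sq_sum_exp {α : Type*} (S : Finset α) (c : α → ℂ) (k : α → ℤ)
    (hk : Set.InjOn k S) :
    ∫ ξ in (0:ℝ)..1, ‖∑ p ∈ S, c p * Complex.exp (2 * π * k p * ξ * Complex.I)‖ ^ 2
      = ∑ p ∈ S, ‖c p‖ ^ 2 := by
  apply Complex.ofReal_injective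
  have hexpand : ∀ ξ : ℝ,
      ((‖∑ p ∈ S, c p * Complex.exp (2 * π * k p * ξ * Complex.I)‖ ^ 2 : ℝ) : ℂ)
        = ∑ p ∈ S, ∑ q ∈ S, c p * (starRingEnd ℂ) (c q)
            * Complex.exp (2 * π * (k p - k q : ℤ) * ξ * Complex.I) := by
    intro ξ
    rw [Complex.ofReal_pow, ← Complex.mul_conj', map_sum, sum_mul_sum]
    refine sum_congr rfl fun p _ => sum_congr rfl fun q _ => ?_
    rw [map_mul, ← Complex.exp_conj, mul_mul_mul_comm, ← Complex.exp_add]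
    simp only [map_mul, map_ofNat, Complex.conj_ofReal, map_intCast, Complex.conj_I]
    push_cast
    ring_nf
  have hint : ∀ (f : α → ℂ) (j : α → ℤ), IntervalIntegrable
      (fun ξ : ℝ => ∑ q ∈ S, f q * Complex.exp (2 * π * j q * ξ * Complex.I)) volume 0 1 :=
    fun f j => (by fun_prop : Continuous _).intervalIntegrable 0 1
  rw [← intervalIntegral.integral_ofReal, intervalIntegral.integral_congr fun ξ _ => hexpand ξ,
    intervalIntegral.integral_finsetSum fun p _ => hint _ _, Complex.ofReal_sum]
  refine sum_congr rfl fun p hp => ?_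
  rw [intervalIntegral.integral_finsetSum fun q _ =>
    (by fun_prop : Continuous _).intervalIntegrable 0 1]
  simp_rw [intervalIntegral.integral_const_mul, integral_exp_two_pi_int_mul, sub_eq_zero]
  rw [sum_eq_single_of_mem p hp fun q hq hqp => by simp [hk.eq_iff hp hq, Ne.symm hqp],
    Complex.ofReal_pow, ← Complex.mul_conj', if_pos rfl, mul_one]

theorem one_sub_pow_mul_geom_sum {R : Type*} [CommRing R] (x : R) (m M : ℕ) :
    (1 - x ^ M) ^ m * ∑ r ∈ range M, x ^ r
      = ∑ p ∈ range (m + 1) ×ˢ range M, (-1) ^ p.1 * (m.choose p.1 : R) * x ^ (p.1 * M + p.2) := by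
  rw [sub_eq_neg_add, add_pow, sum_product, sum_mul]
  refine sum_congr rfl fun j _ => ?_
  rw [mul_sum]
  refine sum_congr rfl fun r _ => ?_
  rw [neg_pow, pow_add, pow_mul']
  ring

theorem norm_one_sub_exp_two_pi_mul_I (θ : ℝ) :
    ‖1 - Complex.exp (2 * π * θ * Complex.I)‖ = 2 * |sin (π * θ)| := by
  rw [norm_sub_rev,
    show (2 * π * θ * Complex.I : ℂ) = Complex.I * (2 * π * θ : ℝ) by push_cast; ring,
    Complex.norm_exp_I_mul_ofReal_sub_one, norm_mul, Real.norm_two, Real.norm_eq_abs]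
  ring_nf

theorem norm_geom_sum_exp_two_pi_mul_I (M : ℕ) {ξ : ℝ} (hξ : sin (π * ξ) ≠ 0) :
    ‖∑ r ∈ range M, Complex.exp (2 * π * ξ * Complex.I) ^ r‖
      = |sin (π * M * ξ)| / |sin (π * ξ)| := by
  have hgeom := congrArg norm (geom_sum_mul (Complex.exp (2 * π * ξ * Complex.I)) M)
  rw [← Complex.exp_nat_mul, norm_mul, norm_sub_rev, norm_sub_rev _ 1,
    show (M * (2 * π * ξ * Complex.I) : ℂ) = 2 * π * (M * ξ : ℝ) * Complex.I by push_cast; ring,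
    norm_one_sub_exp_two_pi_mul_I, norm_one_sub_exp_two_pi_mul_I] at hgeom
  rw [eq_div_iff (abs_ne_zero.mpr hξ), mul_assoc π]
  linarith

def sigmaDeltaKernel (m M : ℕ) (ξ : ℝ) : ℝ :=
  |2 * sin (π * ξ)| ^ (2 * m) * |sin (π * M * ξ) / (M * sin (π * ξ))| ^ (2 * (m + 1))

theorem sigmaDeltaKernel_eq_norm_sq_div (m M : ℕ) {ξ : ℝ} (hξ : sin (π * ξ) ≠ 0) :
    sigmaDeltaKernel m M ξ
      = ‖(1 - Complex.exp (2 * π * ξ * Complex.I) ^ M) ^ m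
          * ∑ r ∈ range M, Complex.exp (2 * π * ξ * Complex.I) ^ r‖ ^ 2
        / (M : ℝ) ^ (2 * m + 2) := by
  rw [← Complex.exp_nat_mul,
    show (M * (2 * π * ξ * Complex.I) : ℂ) = 2 * π * (M * ξ : ℝ) * Complex.I by push_cast; ring,
    norm_mul, norm_pow, norm_one_sub_exp_two_pi_mul_I, norm_geom_sum_exp_two_pi_mul_I M hξ,
    sigmaDeltaKernel, mul_assoc π, abs_div, abs_mul, abs_mul, Nat.abs_cast, abs_two]
  have ha : |sin (π * ξ)| ≠ 0 := abs_ne_zero.mpr hξ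
  rcases eq_or_ne (M : ℝ) 0 with hM | hM
  · simp [hM]
  rw [show 2 * (m + 1) = 2 * m + 2 by ring, div_pow, mul_pow (M : ℝ), mul_pow 2]
  field_simp
  ring

theorem integral_norm_sq_one_sub_pow_mul_geom_sum (m M : ℕ) :
    ∫ ξ in (0:ℝ)..1, ‖(1 - Complex.exp (2 * π * ξ * Complex.I) ^ M) ^ m
        * ∑ r ∈ range M, Complex.exp (2 * π * ξ * Complex.I) ^ r‖ ^ 2
      = M * (2 * m).choose m := by
  have hexpand : ∀ ξ : ℝ, (1 - Complex.exp (2 * π * ξ * Complex.I) ^ M) ^ m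
        * ∑ r ∈ range M, Complex.exp (2 * π * ξ * Complex.I) ^ r
      = ∑ p ∈ range (m + 1) ×ˢ range M, ((-1) ^ p.1 * (m.choose p.1 : ℂ))
          * Complex.exp (2 * π * ((p.1 * M + p.2 : ℕ) : ℤ) * ξ * Complex.I) := by
    intro ξ
    rw [one_sub_pow_mul_geom_sum]
    refine sum_congr rfl fun p _ => ?_
    rw [← Complex.exp_nat_mul]
    push_cast
    ring_nf
  have hinj : Set.InjOn (fun p : ℕ × ℕ => ((p.1 * M + p.2 : ℕ) : ℤ))
      ↑(range (m + 1) ×ˢ range M) := by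
    rintro ⟨j, r⟩ hjr ⟨j', r'⟩ hjr' h
    simp only [coe_product, coe_range, Set.mem_prod, Set.mem_Iio, Nat.cast_inj] at hjr hjr' h
    obtain ⟨-, hr⟩ := hjr
    obtain ⟨-, hr'⟩ := hjr'
    have hM : 0 < M := by omega
    have hr_eq : r = r' := by
      simpa [Nat.add_mod, Nat.mod_eq_of_lt hr, Nat.mod_eq_of_lt hr'] using congrArg (· % M) h
    subst hr_eq
    simp [Nat.eq_of_mul_eq_mul_right hM (Nat.add_right_cancel h)]
  simp_rw [hexpand]
  rw [integral_norm_sq_sum_exp _ _ _ hinj, sum_product]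
  simp only [norm_mul, norm_pow, norm_neg, norm_one, one_pow, one_mul, Complex.norm_natCast,
    sum_const, card_range, nsmul_eq_mul, ← mul_sum]
  exact_mod_cast congrArg (M * ·) (Nat.sum_range_choose_sq m)

-- At `ξ = 0, 1` the quotient in the kernel is the junk value `0 / 0 = 0`, not its continuous
-- extension; this only affects a null set.
theorem setIntegral_sigmaDeltaKernel (m M : ℕ) :
    ∫ ξ in Set.Ioc 0 1, sigmaDeltaKernel m M ξ
      = (2 * m).choose m * ((M : ℝ) ^ (2 * m + 1))⁻¹ := by
  have hsin : ∀ ξ ∈ Set.Ioo (0:ℝ) 1, sin (π * ξ) ≠ 0 := fun ξ hξ =>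
    (sin_pos_of_pos_of_lt_pi (by nlinarith [pi_pos, hξ.1]) (by nlinarith [pi_pos, hξ.2])).ne'
  rw [integral_Ioc_eq_integral_Ioo, setIntegral_congr_fun measurableSet_Ioo
    fun ξ hξ => sigmaDeltaKernel_eq_norm_sq_div m M (hsin ξ hξ), ← integral_Ioc_eq_integral_Ioo,
    ← intervalIntegral.integral_of_le zero_le_one, intervalIntegral.integral_div,
    integral_norm_sq_one_sub_pow_mul_geom_sum]
  rcases eq_or_ne (M : ℝ) 0 with hM | hM
  · simp [hM]
  field_simp
  ring

theorem abs_sin_nat_mul_le (n : ℕ) (x : ℝ) : |sin (n * x)| ≤ n * |sin x| := by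
  induction n with
  | zero => simp
  | succ n ih =>
    rw [Nat.cast_succ, add_mul, one_mul, sin_add]
    calc |sin (n * x) * cos x + cos (n * x) * sin x|
        ≤ |sin (n * x)| * |cos x| + |cos (n * x)| * |sin x| := by
          rw [← abs_mul, ← abs_mul]; exact abs_add_le _ _
      _ ≤ n * |sin x| * 1 + 1 * |sin x| := by
          gcongr
          exacts [abs_cos_le_one _, abs_cos_le_one _]
      _ = (n + 1) * |sin x| := by ring

theorem sin_pi_mul_le_sin_pi_mul_of_mem_Icc {δ ξ : ℝ} (hδ : 0 ≤ δ) (hξ : ξ ∈ Set.Icc δ (1 - δ)) :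
    sin (π * δ) ≤ sin (π * ξ) := by
  wlog hξ_half : ξ ≤ 1 / 2 generalizing ξ
  · rw [show sin (π * ξ) = sin (π * (1 - ξ)) by rw [mul_one_sub, sin_pi_sub]]
    exact this ⟨by linarith [hξ.2], by linarith [hξ.1]⟩ (by linarith)
  exact sin_le_sin_of_le_of_le_pi_div_two (by nlinarith [pi_pos]) (by nlinarith [pi_pos])
    (mul_le_mul_of_nonneg_left hξ.1 pi_pos.le)

theorem sigmaDeltaKernel_nonneg (m M : ℕ) (ξ : ℝ) : 0 ≤ sigmaDeltaKernel m M ξ := by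
  unfold sigmaDeltaKernel; positivity

theorem sigmaDeltaKernel_le_of_abs_le {m M : ℕ} {ξ q : ℝ}
    (hq : |sin (π * M * ξ) / (M * sin (π * ξ))| ≤ q) :
    sigmaDeltaKernel m M ξ ≤ 4 ^ m * q ^ (2 * m + 2) := by
  have h2sin : |2 * sin (π * ξ)| ^ (2 * m) ≤ 4 ^ m := by
    rw [pow_mul, sq_abs, show (4 : ℝ) = 2 ^ 2 by norm_num, mul_pow]
    gcongr
    nlinarith [sin_sq_le_one (π * ξ)]
  exact mul_le_mul h2sin (pow_le_pow_left₀ (abs_nonneg _) hq _) (by positivity) (by positivity)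

theorem sigmaDeltaKernel_le (m M : ℕ) (ξ : ℝ) : sigmaDeltaKernel m M ξ ≤ 4 ^ m := by
  have hq : |sin (π * M * ξ) / (M * sin (π * ξ))| ≤ 1 := by
    rw [abs_div, abs_mul, Nat.abs_cast, show π * M * ξ = M * (π * ξ) by ring]
    exact div_le_one_of_le₀ (abs_sin_nat_mul_le M _) (by positivity)
  simpa using sigmaDeltaKernel_le_of_abs_le (m := m) hq

theorem sigmaDeltaKernel_le_of_mem_Icc (m M : ℕ) {δ ξ : ℝ} (hδ : 0 < δ)
    (hξ : ξ ∈ Set.Icc δ (1 - δ)) :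
    sigmaDeltaKernel m M ξ ≤ 4 ^ m / sin (π * δ) ^ (2 * m + 2) * ((M : ℝ) ^ (2 * m + 2))⁻¹ := by
  have hsinδ : 0 < sin (π * δ) :=
    sin_pos_of_pos_of_lt_pi (by positivity) (by nlinarith [pi_pos, hξ.1, hξ.2])
  have hq : |sin (π * M * ξ) / (M * sin (π * ξ))| ≤ (M * sin (π * δ))⁻¹ := by
    rcases Nat.eq_zero_or_pos M with rfl | hM
    · simp
    rw [abs_div, abs_mul, Nat.abs_cast, ← one_div]
    gcongr
    · exact abs_sin_le_one _
    · exact (sin_pi_mul_le_sin_pi_mul_of_mem_Icc hδ.le hξ).trans (le_abs_self _)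
  refine (sigmaDeltaKernel_le_of_abs_le hq).trans_eq ?_
  ring

theorem measurable_sigmaDeltaKernel (m M : ℕ) : Measurable (sigmaDeltaKernel m M) := by
  unfold sigmaDeltaKernel
  fun_prop

theorem integrableOn_sigmaDeltaKernel_mul (m M : ℕ) {g : ℝ → ℝ}
    (hg : IntegrableOn g (Set.Ioc 0 1)) :
    IntegrableOn (fun ξ => sigmaDeltaKernel m M ξ * g ξ) (Set.Ioc 0 1) :=
  hg.bdd_mul (measurable_sigmaDeltaKernel m M).aestronglyMeasurable <| ae_of_all _ fun ξ => by
    rw [Real.norm_eq_abs, abs_of_nonneg (sigmaDeltaKernel_nonneg m M ξ)]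
    exact sigmaDeltaKernel_le m M ξ

theorem integrableOn_sigmaDeltaKernel (m M : ℕ) :
    IntegrableOn (sigmaDeltaKernel m M) (Set.Ioc 0 1) := by
  simpa using integrableOn_sigmaDeltaKernel_mul m M (integrableOn_const (C := (1 : ℝ)) (by simp))

theorem abs_integral_mul_sub_le {α : Type*} [MeasurableSpace α] {μ : Measure α}
    [IsFiniteMeasure μ] {K s : α → ℝ} {t ε b : ℝ} (hε : 0 ≤ ε) (hK_nonneg : ∀ᵐ x ∂μ, 0 ≤ K x)
    (hK : Integrable K μ) (hKs : Integrable (fun x => K x * s x) μ) (hs : Integrable s μ)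
    (hsplit : ∀ᵐ x ∂μ, |s x - t| ≤ ε ∨ K x ≤ b) :
    |∫ x, K x * s x ∂μ - (∫ x, K x ∂μ) * t| ≤ ε * ∫ x, K x ∂μ + |b| * ∫ x, |s x - t| ∂μ := by
  have hst : Integrable (fun x => |s x - t|) μ := (hs.sub (integrable_const t)).abs
  have hKst : Integrable (fun x => K x * (s x - t)) μ := by
    simp_rw [mul_sub]
    exact hKs.sub (hK.mul_const t)
  rw [← integral_mul_const, ← integral_sub hKs (hK.mul_const t), ← integral_const_mul,
    ← integral_const_mul, ← integral_add (hK.const_mul ε) (hst.const_mul |b|)]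
  calc |∫ x, K x * s x - K x * t ∂μ|
      = |∫ x, K x * (s x - t) ∂μ| := by simp only [mul_sub]
    _ ≤ ∫ x, |K x * (s x - t)| ∂μ := abs_integral_le_integral_abs
    _ ≤ ∫ x, ε * K x + |b| * |s x - t| ∂μ := by
      refine integral_mono_ae hKst.abs ((hK.const_mul ε).add (hst.const_mul |b|)) ?_
      filter_upwards [hK_nonneg, hsplit] with x hKx hx
      rw [abs_mul, abs_of_nonneg hKx]
      rcases hx with hx | hx
      · nlinarith [abs_nonneg b, abs_nonneg (s x - t)]
      · nlinarith [le_abs_self b, abs_nonneg (s x - t)]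

theorem exists_forall_abs_sub_le_of_notMem_Icc {s : ℝ → ℝ} (hper : Function.Periodic s 1)
    (hcont : ContinuousAt s 0) {ε : ℝ} (hε : 0 < ε) :
    ∃ δ > 0, ∀ ξ ∈ Set.Ioc 0 1, ξ ∉ Set.Icc δ (1 - δ) → |s ξ - s 0| ≤ ε := by
  obtain ⟨δ, hδ, hs⟩ := Metric.continuousAt_iff.mp hcont ε hε
  refine ⟨δ, hδ, fun ξ hξ hξδ => ?_⟩
  simp only [Real.dist_eq, sub_zero] at hs
  rcases not_and_or.mp hξδ with h | h
  · exact (hs (by rw [abs_of_pos hξ.1]; linarith)).le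
  · rw [← hper.sub_eq]
    exact (hs (by rw [abs_of_nonpos (by linarith [hξ.2])]; linarith)).le

theorem isLittleO_setIntegral_mul_sub {ι : Type*} {l : Filter ι} {K : ι → ℝ → ℝ} {a : ι → ℝ}
    {s : ℝ → ℝ} (hper : Function.Periodic s 1) (hint : IntegrableOn s (Set.Ioc 0 1))
    (hcont : ContinuousAt s 0) (hK_nonneg : ∀ i ξ, 0 ≤ K i ξ)
    (hK_int : ∀ i, IntegrableOn (K i) (Set.Ioc 0 1))
    (hKs_int : ∀ i, IntegrableOn (fun ξ => K i ξ * s ξ) (Set.Ioc 0 1))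
    (hK_mass : ∀ i, ∫ ξ in Set.Ioc 0 1, K i ξ = a i)
    (hK_conc : ∀ δ > 0, ∃ B : ι → ℝ,
      B =o[l] a ∧ ∀ᶠ i in l, ∀ ξ ∈ Set.Icc δ (1 - δ), K i ξ ≤ B i) :
    (fun i => (∫ ξ in Set.Ioc 0 1, K i ξ * s ξ) - a i * s 0) =o[l] a := by
  rw [isLittleO_iff]
  intro c hc
  obtain ⟨δ, hδ, hnear⟩ := exists_forall_abs_sub_le_of_notMem_Icc hper hcont (half_pos hc)
  obtain ⟨B, hBa, hB⟩ := hK_conc δ hδ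
  set S := ∫ ξ in Set.Ioc 0 1, |s ξ - s 0|
  have hS : 0 ≤ S := integral_nonneg fun _ => abs_nonneg _
  filter_upwards [hB, hBa.bound (c := c / 2 / (S + 1)) (by positivity)] with i hBi hBai
  have ha : 0 ≤ a i := hK_mass i ▸ setIntegral_nonneg measurableSet_Ioc fun ξ _ => hK_nonneg i ξ
  have hsplit : ∀ᵐ ξ ∂volume.restrict (Set.Ioc 0 1), |s ξ - s 0| ≤ c / 2 ∨ K i ξ ≤ B i := by
    refine ae_restrict_of_forall_mem measurableSet_Ioc fun ξ hξ => ?_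
    by_cases hmid : ξ ∈ Set.Icc δ (1 - δ)
    · exact Or.inr (hBi ξ hmid)
    · exact Or.inl (hnear ξ hξ hmid)
  have hbound := abs_integral_mul_sub_le (half_pos hc).le (ae_of_all _ (hK_nonneg i)) (hK_int i)
    (hKs_int i) hint hsplit
  rw [hK_mass i] at hbound
  change _ ≤ _ + |B i| * S at hbound
  rw [Real.norm_eq_abs, Real.norm_eq_abs, abs_of_nonneg ha] at hBai ⊢
  have hBS : |B i| * S ≤ c / 2 * a i := by
    calc |B i| * S ≤ c / 2 / (S + 1) * a i * S := by gcongr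
      _ = c / 2 * a i * (S / (S + 1)) := by ring
      _ ≤ c / 2 * a i * 1 := by gcongr; exact div_le_one_of_le₀ (by linarith) (by linarith)
      _ = c / 2 * a i := mul_one _
  refine hbound.trans ?_
  linarith

theorem isLittleO_inv_pow_succ (k : ℕ) :
    (fun M : ℕ => ((M : ℝ) ^ (k + 1))⁻¹) =o[atTop] fun M : ℕ => ((M : ℝ) ^ k)⁻¹ := by
  have h := (isLittleO_one_iff ℝ).mpr (tendsto_inv_atTop_nhds_zero_nat (𝕜 := ℝ))
  simpa [pow_succ, mul_comm] using
    h.mul_isBigO (isBigO_refl (fun M : ℕ => ((M : ℝ) ^ k)⁻¹) atTop)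

theorem exists_isLittleO_sigmaDeltaKernel_le (m : ℕ) {δ : ℝ} (hδ : 0 < δ) :
    ∃ B : ℕ → ℝ, B =o[atTop] (fun M : ℕ => (2 * m).choose m * ((M : ℝ) ^ (2 * m + 1))⁻¹) ∧
      ∀ᶠ M in atTop, ∀ ξ ∈ Set.Icc δ (1 - δ), sigmaDeltaKernel m M ξ ≤ B M := by
  have hC : ((2 * m).choose m : ℝ) ≠ 0 := Nat.cast_ne_zero.mpr (Nat.choose_pos (by omega)).ne'
  exact ⟨_, ((isLittleO_inv_pow_succ (2 * m + 1)).const_mul_left _).trans_isBigO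
    (isBigO_self_const_mul hC _ atTop),
    Eventually.of_forall fun M ξ hξ => sigmaDeltaKernel_le_of_mem_Icc m M hδ hξ⟩

theorem ac_mse_asymptotics_general (m : ℕ) (s : ℝ → ℝ)
    (hper : Function.Periodic s 1)
    (hint : IntegrableOn s (Set.Ioc (0:ℝ) 1)) (hcont : ContinuousAt s 0) :
    (fun M : ℕ =>
        (∫ ξ in (0:ℝ)..1,
            |2 * Real.sin (π * ξ)| ^ (2 * m) *
              |Real.sin (π * M * ξ) / (M * Real.sin (π * ξ))| ^ (2 * (m + 1)) * s ξ)
          - (Nat.choose (2 * m) m : ℝ) * s 0 * ((M : ℝ) ^ (2 * m + 1))⁻¹)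
      =o[atTop] (fun M : ℕ => ((M : ℝ) ^ (2 * m + 1))⁻¹) := by
  have hmain := isLittleO_setIntegral_mul_sub hper hint hcont (sigmaDeltaKernel_nonneg m)
    (integrableOn_sigmaDeltaKernel m) (fun M => integrableOn_sigmaDeltaKernel_mul m M hint)
    (setIntegral_sigmaDeltaKernel m) fun _ => exists_isLittleO_sigmaDeltaKernel_le m
  refine (hmain.trans_isBigO (isBigO_const_mul_self _ _ _)).congr_left fun M => ?_
  rw [intervalIntegral.integral_of_le zero_le_one]
  simp only [sigmaDeltaKernel]
  ring

/-- for `m ≥ 1` and a nonnegative `s ∈ L¹(𝕋)` continuous at `0`, the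
absolutely continuous mean square error after `sinc^{m+1}` filtering of length `M`
satisfies
`∫₀¹ |2 sin(πξ)|^{2m} |Sinc^{m+1}_M(ξ)|² s(ξ) dξ = C(2m,m) s(0) M^{−2m−1} + o(M^{−2m−1})`
as `M → ∞`, where `C(2m,m)` is the central binomial coefficient. -/
theorem ac_mse_asymptotics (m : ℕ) (hm : 1 ≤ m) (s : ℝ → ℝ)
    (hper : Function.Periodic s 1) (hpos : ∀ ξ, 0 ≤ s ξ)
    (hint : IntegrableOn s (Set.Ioc (0:ℝ) 1)) (hcont : ContinuousAt s 0) :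
    (fun M : ℕ =>
        (∫ ξ in (0:ℝ)..1,
            |2 * Real.sin (π * ξ)| ^ (2 * m) *
              |Real.sin (π * M * ξ) / (M * Real.sin (π * ξ))| ^ (2 * (m + 1)) * s ξ)
          - (Nat.choose (2 * m) m : ℝ) * s 0 * ((M : ℝ) ^ (2 * m + 1))⁻¹)
      =o[atTop] (fun M : ℕ => ((M : ℝ) ^ (2 * m + 1))⁻¹) :=
  ac_mse_asymptotics_general m s hper hint hcont
end
end
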